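/- arXiv:1803.06284 — 3 statements merged into one kernel-verified Lean document; each statement's English description precedes it below -/
import Mathlib

section
/- Let E be a real Banach space, let V ⊆ ℝⁿ be an open set that is star-convex with respect to a point y ∈ V, and let a : V → E be infinitely Fréchet differentiable (smooth) on V. Then a(x) = a(y) + Σᵢ (xᵢ − yᵢ) gᵢ(x) for all x ∈ V, where gᵢ(x) = ∫₀¹ ∂ᵢa(y + s(x − y)) ds; each gᵢ : V → E is smooth and satisfies gᵢ(y) = ∂ᵢa(y). -/
/-!
Along the segment `s ↦ y + s • (x - y)`, which stays in `V` by star-convexity, the fundamental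
theorem of calculus gives `a x - a y = (∫₀¹ Da(y + s(x - y)) ds) (x - y)`; expanding `x - y` in the
standard basis yields the formula. Smoothness of `gᵢ` is smoothness of a parametric integral
`x ↦ ∫ₐᵇ f x t dt` whose integrand is smooth on an open set `W ⊇ {x} × [a, b]`: by compactness of
`[a, b]`, differentiation under the integral sign applies near `x`, and its derivative is again
such an integral, of the partial derivative `∂ₓf`, so induction on the order of smoothness
concludes.
-/

open Set Topology MeasureTheory Function
open scoped Interval ContDiff

theorem IsOpen.setOf_forall_prodMk_mem {X Y : Type*} [TopologicalSpace X] [TopologicalSpace Y]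
    {W : Set (X × Y)} (hW : IsOpen W) {K : Set Y} (hK : IsCompact K) :
    IsOpen {x | ∀ t ∈ K, (x, t) ∈ W} :=
  isOpen_iff_eventually.2 fun _ hx =>
    hK.eventually_forall_of_forall_eventually fun t ht => hW.mem_nhds (hx t ht)

theorem ContinuousOn.intervalIntegrable_comp_prodMk_right {X E : Type*} [TopologicalSpace X]
    [NormedAddCommGroup E] {g : X × ℝ → E} {W : Set (X × ℝ)} (hg : ContinuousOn g W) {x : X}
    {a b : ℝ} (hx : ∀ t ∈ [[a, b]], (x, t) ∈ W) :
    IntervalIntegrable (fun t => g (x, t)) volume a b :=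
  (hg.comp (Continuous.prodMk_right x).continuousOn hx).intervalIntegrable

section ParametricIntegral

universe uH uE

variable {H : Type uH} [NormedAddCommGroup H] [NormedSpace ℝ H] {W : Set (H × ℝ)} {a b : ℝ}

theorem hasFDerivAt_intervalIntegral_of_contDiffOn {E : Type*} [NormedAddCommGroup E]
    [NormedSpace ℝ E] {f : H → ℝ → E} (hW : IsOpen W) (hf : ContDiffOn ℝ 1 (uncurry f) W)
    {x₀ : H} (hx₀ : ∀ t ∈ [[a, b]], (x₀, t) ∈ W) :
    HasFDerivAt (fun x => ∫ t in a..b, f x t)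
      (∫ t in a..b, (fderiv ℝ (uncurry f) (x₀, t)).comp (.inl ℝ H ℝ)) x₀ := by
  set D : H × ℝ → H →L[ℝ] E := fun p => (fderiv ℝ (uncurry f) p).comp (.inl ℝ H ℝ)
  have hD : ContinuousOn D W :=
    (hf.continuousOn_fderiv_of_isOpen hW le_rfl).clm_comp continuousOn_const
  obtain ⟨M, hM⟩ := (isCompact_uIcc.image (Continuous.prodMk_right x₀)).exists_bound_of_continuousOn
    (hD.mono (by rintro _ ⟨t, ht, rfl⟩; exact hx₀ t ht))
  set N := {x | ∀ t ∈ [[a, b]], (x, t) ∈ W ∩ (fun p => ‖D p‖) ⁻¹' Iio (M + 1)}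
  have hN : N ∈ 𝓝 x₀ :=
    ((hD.norm.isOpen_inter_preimage hW isOpen_Iio).setOf_forall_prodMk_mem isCompact_uIcc).mem_nhds
      fun t ht => ⟨hx₀ t ht, (hM _ ⟨t, ht, rfl⟩).trans_lt (lt_add_one M)⟩
  have hint : ∀ x ∈ N, IntervalIntegrable (f x) volume a b := fun x hx =>
    hf.continuousOn.intervalIntegrable_comp_prodMk_right fun t ht => (hx t ht).1
  refine intervalIntegral.hasFDerivAt_integral_of_dominated_of_fderiv_le
    (F' := fun x t => D (x, t)) (bound := fun _ => M + 1) hN ?_ (hint x₀ (mem_of_mem_nhds hN))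
    ?_ ?_ intervalIntegrable_const ?_
  · filter_upwards [hN] with x hx
    exact (intervalIntegrable_iff.1 (hint x hx)).aestronglyMeasurable
  · exact (intervalIntegrable_iff.1
      (hD.intervalIntegrable_comp_prodMk_right hx₀)).aestronglyMeasurable
  · exact .of_forall fun t ht x hx => (hx t (uIoc_subset_uIcc ht)).2.le
  · refine .of_forall fun t ht x hx => ?_
    have hdiff : DifferentiableAt ℝ (uncurry f) (x, t) :=
      (hf.differentiableOn one_ne_zero).differentiableAt
        (hW.mem_nhds (hx t (uIoc_subset_uIcc ht)).1)
    exact hdiff.hasFDerivAt.comp x (hasFDerivAt_prodMk_left (𝕜 := ℝ) x t)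

/- `E` lives in `Type max uH uE` so that the induction hypothesis can be applied to the
partial derivatives, which take values in `H →L[ℝ] E`. -/
theorem contDiffOn_intervalIntegral_of_contDiffOn_succ (hW : IsOpen W) (n : ℕ) :
    ∀ {E : Type max uH uE} [NormedAddCommGroup E] [NormedSpace ℝ E] {f : H → ℝ → E},
      ContDiffOn ℝ (n + 1) (uncurry f) W →
      ContDiffOn ℝ n (fun x => ∫ t in a..b, f x t) {x | ∀ t ∈ [[a, b]], (x, t) ∈ W} := by
  have hU : IsOpen {x | ∀ t ∈ [[a, b]], (x, t) ∈ W} := hW.setOf_forall_prodMk_mem isCompact_uIcc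
  induction n with
  | zero =>
    intro E _ _ f hf
    rw [Nat.cast_zero, contDiffOn_zero]
    exact fun x hx => (hasFDerivAt_intervalIntegral_of_contDiffOn hW (by simpa using hf)
      hx).continuousAt.continuousWithinAt
  | succ n ih =>
    intro E _ _ f hf
    have hpartial : ContDiffOn ℝ (n + 1)
        (uncurry fun x t => (fderiv ℝ (uncurry f) (x, t)).comp (.inl ℝ H ℝ)) W :=
      (hf.fderiv_of_isOpen hW le_rfl).clm_comp contDiffOn_const
    have hderiv : ∀ x ∈ {x | ∀ t ∈ [[a, b]], (x, t) ∈ W}, HasFDerivAt _ _ x := fun x hx =>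
      hasFDerivAt_intervalIntegral_of_contDiffOn hW (hf.of_le (by simp)) hx
    rw [Nat.cast_succ, contDiffOn_succ_iff_fderiv_of_isOpen hU]
    refine ⟨fun x hx => (hderiv x hx).differentiableAt.differentiableWithinAt, by simp, ?_⟩
    exact (ih hpartial).congr fun x hx => (hderiv x hx).fderiv

theorem contDiffOn_intervalIntegral_of_contDiffOn {E : Type max uH uE} [NormedAddCommGroup E]
    [NormedSpace ℝ E] {f : H → ℝ → E} (hW : IsOpen W) (hf : ContDiffOn ℝ ∞ (uncurry f) W) :
    ContDiffOn ℝ ∞ (fun x => ∫ t in a..b, f x t) {x | ∀ t ∈ [[a, b]], (x, t) ∈ W} :=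
  contDiffOn_infty.2 fun n =>
    contDiffOn_intervalIntegral_of_contDiffOn_succ hW n (hf.of_le (by exact_mod_cast le_top))

theorem StarConvex.contDiffOn_intervalIntegral_comp_add_smul_sub {E : Type max uH uE}
    [NormedAddCommGroup E] [NormedSpace ℝ E] {V : Set H} {y : H} (hV : IsOpen V)
    (hstar : StarConvex ℝ y V) {g : H → E} (hg : ContDiffOn ℝ ∞ g V) :
    ContDiffOn ℝ ∞ (fun x => ∫ s in (0:ℝ)..1, g (y + s • (x - y))) V := by
  have hW : IsOpen {p : H × ℝ | y + p.2 • (p.1 - y) ∈ V} := hV.preimage (by fun_prop)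
  refine (contDiffOn_intervalIntegral_of_contDiffOn (f := fun x s => g (y + s • (x - y))) hW
    (hg.comp (by fun_prop) fun _ hp => hp)).mono fun x hx s hs => ?_
  rw [uIcc_of_le zero_le_one] at hs
  exact hstar.add_smul_sub_mem hx hs.1 hs.2

end ParametricIntegral

theorem intervalIntegral_fderiv_add_smul_apply_eq_sub {H E : Type*} [NormedAddCommGroup H]
    [NormedSpace ℝ H] [NormedAddCommGroup E] [NormedSpace ℝ E] [CompleteSpace E]
    {g : H → E} {g' : H → H →L[ℝ] E} {x v : H}
    (hg : ∀ t ∈ Icc (0:ℝ) 1, HasFDerivAt g (g' (x + t • v)) (x + t • v))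
    (hg' : ContinuousOn (fun t : ℝ => g' (x + t • v)) (Icc 0 1)) :
    (∫ t in (0:ℝ)..1, g' (x + t • v)) v = g (x + v) - g x := by
  rw [ContinuousLinearMap.intervalIntegral_apply (hg'.intervalIntegrable_of_Icc zero_le_one),
    intervalIntegral.integral_eq_sub_of_hasDerivAt (f := fun t : ℝ => g (x + t • v))]
  · simp
  · intro t ht
    rw [uIcc_of_le zero_le_one] at ht
    have hline : HasDerivAt (fun t : ℝ => x + t • v) v t := by
      simpa using ((hasDerivAt_id t).smul_const v).const_add x
    exact (hg t ht).comp_hasDerivAt t hline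
  · exact (hg'.clm_apply continuousOn_const).intervalIntegrable_of_Icc zero_le_one

theorem StarConvex.eq_add_sum_smul_intervalIntegral_fderiv {ι E : Type*} [Fintype ι]
    [DecidableEq ι] [NormedAddCommGroup E] [NormedSpace ℝ E] [CompleteSpace E]
    {V : Set (ι → ℝ)} {y x : ι → ℝ} (hV : IsOpen V) (hstar : StarConvex ℝ y V)
    {a : (ι → ℝ) → E} (ha : ContDiffOn ℝ 1 a V) (hx : x ∈ V) :
    a x = a y + ∑ i, (x i - y i) •
      ∫ s in (0:ℝ)..1, fderiv ℝ a (y + s • (x - y)) (Pi.single i 1) := by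
  have hseg : ∀ s ∈ Icc (0:ℝ) 1, y + s • (x - y) ∈ V := fun s hs =>
    hstar.add_smul_sub_mem hx hs.1 hs.2
  have hcont : ContinuousOn (fun s : ℝ => fderiv ℝ a (y + s • (x - y))) (Icc 0 1) :=
    (ha.continuousOn_fderiv_of_isOpen hV le_rfl).comp (by fun_prop) hseg
  have hftc := intervalIntegral_fderiv_add_smul_apply_eq_sub (fun s hs =>
    ((ha.differentiableOn one_ne_zero).differentiableAt (hV.mem_nhds (hseg s hs))).hasFDerivAt)
    hcont
  rw [add_sub_cancel] at hftc
  set L := ∫ s in (0:ℝ)..1, fderiv ℝ a (y + s • (x - y))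
  have hL : L (x - y) = ∑ i, (x i - y i) • L (Pi.single i 1) := by
    conv_lhs => rw [pi_eq_sum_univ' (x - y)]
    simp only [map_sum, map_smul, Pi.sub_apply]
  rw [← sub_eq_iff_eq_add', ← hftc, hL]
  simp_rw [L, ContinuousLinearMap.intervalIntegral_apply
    (hcont.intervalIntegrable_of_Icc zero_le_one)]

theorem hadamard_first_order_expansion_general
    {n : ℕ} {E : Type*} [NormedAddCommGroup E] [NormedSpace ℝ E] [CompleteSpace E]
    {V : Set (Fin n → ℝ)} (hV : IsOpen V) {y : Fin n → ℝ}
    (hstar : StarConvex ℝ y V) {a : (Fin n → ℝ) → E}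
    (ha : ContDiffOn ℝ (⊤ : ℕ∞) a V) :
    (∀ x ∈ V,
      a x = a y + ∑ i, (x i - y i) •
        ∫ s in (0:ℝ)..1, fderiv ℝ a (y + s • (x - y)) (Pi.single i 1)) ∧
    (∀ i : Fin n, ContDiffOn ℝ (⊤ : ℕ∞)
      (fun x => ∫ s in (0:ℝ)..1, fderiv ℝ a (y + s • (x - y)) (Pi.single i 1)) V) ∧
    (∀ i : Fin n,
      (∫ s in (0:ℝ)..1, fderiv ℝ a (y + s • (y - y)) (Pi.single i 1))
        = fderiv ℝ a y (Pi.single i 1)) := by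
  have hpartial (i : Fin n) : ContDiffOn ℝ ∞ (fun z => fderiv ℝ a z (Pi.single i 1)) V :=
    (ha.fderiv_of_isOpen hV le_rfl).clm_apply contDiffOn_const
  refine ⟨fun x hx => hstar.eq_add_sum_smul_intervalIntegral_fderiv hV (ha.of_le (by simp)) hx,
    fun i => hstar.contDiffOn_intervalIntegral_comp_add_smul_sub hV (hpartial i), fun i => by simp⟩

/-- **First-order Hadamard-type expansion** for a smooth map from a star-convex open
subset `V ⊆ ℝⁿ` into a real Banach space `E`: for every `x ∈ V`,
`a x = a y + ∑ᵢ (xᵢ - yᵢ) gᵢ(x)` where `gᵢ(x) = ∫₀¹ ∂ᵢa(y + s(x - y)) ds`;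
each `gᵢ` is smooth on `V` and `gᵢ(y) = ∂ᵢa(y)`. -/
theorem hadamard_first_order_expansion
    {n : ℕ} {E : Type*} [NormedAddCommGroup E] [NormedSpace ℝ E] [CompleteSpace E]
    {V : Set (Fin n → ℝ)} (hV : IsOpen V) {y : Fin n → ℝ} (hyV : y ∈ V)
    (hstar : StarConvex ℝ y V) {a : (Fin n → ℝ) → E}
    (ha : ContDiffOn ℝ (⊤ : ℕ∞) a V) :
    (∀ x ∈ V,
      a x = a y + ∑ i, (x i - y i) •
        ∫ s in (0:ℝ)..1, fderiv ℝ a (y + s • (x - y)) (Pi.single i 1)) ∧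
    (∀ i : Fin n, ContDiffOn ℝ (⊤ : ℕ∞)
      (fun x => ∫ s in (0:ℝ)..1, fderiv ℝ a (y + s • (x - y)) (Pi.single i 1)) V) ∧
    (∀ i : Fin n,
      (∫ s in (0:ℝ)..1, fderiv ℝ a (y + s • (y - y)) (Pi.single i 1))
        = fderiv ℝ a y (Pi.single i 1)) :=
  hadamard_first_order_expansion_general hV hstar ha
end

section
/- Let (K,μ) be a probability space and V ⊆ ℝⁿ an open set. Then every derivation ξ of the algebra A(V⊗K) satisfies ξ(a) = Σᵢ ξ(xᵢ) · ∂ᵢa for every a ∈ A(V⊗K), where xᵢ ∈ A(V⊗K) is the i-th coordinate function x ↦ xᵢ·1 and ∂ᵢa is the i-th partial derivative of a. Consequently the map ξ ↦ (ξ(x₁), …, ξ(xₙ)) is an isomorphism of A(V⊗K)-modules from the module Der(A(V⊗K)) of derivations onto A(V⊗K)ⁿ; in particular Der(A(V⊗K)) is a free A(V⊗K)-module of rank n with basis the partial derivatives ∂₁, …, ∂ₙ. -/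
open MeasureTheory

noncomputable section

variable {n : ℕ} {K : Type*} [MeasurableSpace K]

/-- The extension by `0` of a map `a : V → L^∞(K,μ)` to all of `ℝⁿ`. -/
def extZero {μ : Measure K} (V : Set (Fin n → ℝ)) (a : V → Lp ℝ ⊤ μ) :
    (Fin n → ℝ) → Lp ℝ ⊤ μ :=
  fun x => letI := Classical.dec (x ∈ V); if h : x ∈ V then a ⟨x, h⟩ else 0

/-- Membership in the algebra `A(V⊗K)`: a map `a : V → L^∞(K,μ)` is in `A(V⊗K)` iff it is
infinitely Fréchet differentiable on `V` (a condition depending only on the values on `V`,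
expressed via the extension by zero). -/
def MemA {μ : Measure K} (V : Set (Fin n → ℝ)) (a : V → Lp ℝ ⊤ μ) : Prop :=
  ContDiffOn ℝ (⊤ : ℕ∞) (extZero V a) V

/-- The `i`-th partial derivative `∂ᵢa` of an element of `A(V⊗K)`. -/
def partialD {μ : Measure K} (V : Set (Fin n → ℝ)) (i : Fin n) (a : V → Lp ℝ ⊤ μ) :
    V → Lp ℝ ⊤ μ :=
  fun x => fderiv ℝ (extZero V a) (x : Fin n → ℝ) (Pi.single i 1)

/-- The `i`-th coordinate function `xᵢ ∈ A(V⊗K)`, i.e. `x ↦ xᵢ · 1`. -/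
def coordFn (μ : Measure K) [IsProbabilityMeasure μ] (V : Set (Fin n → ℝ)) (i : Fin n) :
    V → Lp ℝ ⊤ μ :=
  fun x => ((x : Fin n → ℝ) i) • MeasureTheory.Lp.const ⊤ μ (1 : ℝ)

/-- `ξ` is a derivation of the algebra `A(V⊗K)` (with the pointwise product `mul` of
`L^∞(K,μ)`-valued functions): it preserves `A(V⊗K)`, is `ℝ`-linear on it, and satisfies the
Leibniz rule `ξ(ab) = a ξ(b) + b ξ(a)`. -/
def IsDerivationA {μ : Measure K} (V : Set (Fin n → ℝ))
    (mul : Lp ℝ ⊤ μ → Lp ℝ ⊤ μ → Lp ℝ ⊤ μ)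
    (ξ : (V → Lp ℝ ⊤ μ) → (V → Lp ℝ ⊤ μ)) : Prop :=
  (∀ a, MemA V a → MemA V (ξ a)) ∧
  (∀ a b, MemA V a → MemA V b → ∀ c : ℝ, ξ (c • a + b) = c • ξ a + ξ b) ∧
  (∀ a b, MemA V a → MemA V b →
    ξ (fun x => mul (a x) (b x)) = fun x => mul (a x) (ξ b x) + mul (b x) (ξ a x))

/-!
A derivation `D` of `L^∞(K,μ)` vanishes: it kills `1`, and writing `f - c = s² - t²` with
`|s|, |t| ≤ √|f - c|` gives `|D f| ≤ C_c √|f - c|` a.e. for every level `c`; covering the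
essential range of `f` by finitely many levels forces `D f = 0`. Hence a derivation `ξ` of
`A(V⊗K)` kills constants, and by the Leibniz rule against a bump function it is local. Hadamard's
lemma `a(x) = a(x₀) + ∑ᵢ (xᵢ - x₀ᵢ) bᵢ(x)` with smooth `bᵢ`, `bᵢ(x₀) = ∂ᵢa(x₀)`, then yields
`ξ(a)(x₀) = ∑ᵢ ξ(xᵢ)(x₀) ∂ᵢa(x₀)`. Conversely `∑ᵢ cᵢ ∂ᵢ` is a derivation taking the value `cᵢ`
on `xᵢ`.
-/

open Set Metric Filter
open scoped Topology ContDiff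

section ParametricIntegral

open scoped Interval

universe u v

theorem intervalIntegrable_unitInterval_slice {X E : Type*} [TopologicalSpace X]
    [NormedAddCommGroup E] {F : ℝ × X → E} {U : Set (ℝ × X)} (hF : ContinuousOn F U) {x : X}
    (hx : ∀ t ∈ Icc (0 : ℝ) 1, (t, x) ∈ U) :
    IntervalIntegrable (fun t => F (t, x)) volume 0 1 := by
  refine (hF.comp (Continuous.continuousOn (by fun_prop)) fun t ht => hx t ?_).intervalIntegrable
  rwa [uIcc_of_le zero_le_one] at ht

variable {X : Type v} [NormedAddCommGroup X] [NormedSpace ℝ X]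

theorem hasFDerivAt_integral_unitInterval {E : Type*} [NormedAddCommGroup E] [NormedSpace ℝ E]
    {F : ℝ × X → E} {U : Set (ℝ × X)} (hU : IsOpen U) (hF : ContDiffOn ℝ 1 F U) {x₀ : X} (hx₀ : ∀ t ∈ Icc (0 : ℝ) 1, (t, x₀) ∈ U) :
    HasFDerivAt (fun x => ∫ t in (0 : ℝ)..1, F (t, x))
      (∫ t in (0 : ℝ)..1, fderiv ℝ F (t, x₀) ∘L ContinuousLinearMap.inr ℝ ℝ X) x₀ := by
  set G : ℝ × X → X →L[ℝ] E := fun p => fderiv ℝ F p ∘L ContinuousLinearMap.inr ℝ ℝ X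
  have hG : ContinuousOn G U :=
    (hF.continuousOn_fderiv_of_isOpen hU le_rfl).clm_comp continuousOn_const
  obtain ⟨C, hC⟩ := isCompact_Icc.exists_bound_of_continuousOn
    (hG.comp (Continuous.continuousOn (by fun_prop)) fun t ht => hx₀ t ht)
  set s := {x | ∀ t ∈ Icc (0 : ℝ) 1, (t, x) ∈ U ∧ ‖G (t, x)‖ < C + 1}
  have hs : s ∈ 𝓝 x₀ := by
    refine isCompact_Icc.eventually_forall_of_forall_eventually fun t ht => ?_
    have hcont : ContinuousAt (fun z : X × ℝ => (z.2, z.1)) (x₀, t) := by fun_prop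
    have hmem := hU.mem_nhds (hx₀ t ht)
    filter_upwards [hcont.preimage_mem_nhds hmem, hcont.eventually
      ((hG.continuousAt hmem).norm.eventually (gt_mem_nhds ((hC t ht).trans_lt (lt_add_one C))))]
      with z hz h'z using ⟨hz, h'z⟩
  have hsU : ∀ x ∈ s, ∀ t ∈ Ι (0 : ℝ) 1, (t, x) ∈ U := fun x hx t ht =>
    (hx t (uIoc_subset_uIcc.trans (uIcc_of_le zero_le_one).subset ht)).1
  refine intervalIntegral.hasFDerivAt_integral_of_dominated_of_fderiv_le
    (F := fun x t => F (t, x)) (F' := fun x t => G (t, x)) (bound := fun _ => C + 1) hs ?_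
    (intervalIntegrable_unitInterval_slice hF.continuousOn hx₀)
    (intervalIntegrable_unitInterval_slice hG hx₀).def'.aestronglyMeasurable ?_
    intervalIntegrable_const ?_
  · filter_upwards [hs] with x hx
    exact (intervalIntegrable_unitInterval_slice hF.continuousOn
      fun t ht => (hx t ht).1).def'.aestronglyMeasurable
  · exact Filter.Eventually.of_forall fun t ht x hx =>
      (hx t (uIoc_subset_uIcc.trans (uIcc_of_le zero_le_one).subset ht)).2.le
  · refine Filter.Eventually.of_forall fun t ht x hx => ?_
    have hmem := hsU x hx t ht
    exact ((hF.differentiableOn one_ne_zero _ hmem).differentiableAt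
      (hU.mem_nhds hmem)).hasFDerivAt.comp x (hasFDerivAt_prodMk_right t x)

/-- The universe of `E` absorbs that of `X`, so that the induction can pass from `E` to
`X →L[ℝ] E`. -/
theorem contDiffOn_integral_unitInterval {E : Type max u v} [NormedAddCommGroup E]
    [NormedSpace ℝ E] {F : ℝ × X → E} {U : Set (ℝ × X)} (hU : IsOpen U)
    (hF : ContDiffOn ℝ ∞ F U) {S : Set X} (hS : IsOpen S)
    (hSU : ∀ x ∈ S, ∀ t ∈ Icc (0 : ℝ) 1, (t, x) ∈ U) :
    ContDiffOn ℝ ∞ (fun x => ∫ t in (0 : ℝ)..1, F (t, x)) S := by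
  suffices h : ∀ m : ℕ, ∀ {E : Type max u v} [NormedAddCommGroup E] [NormedSpace ℝ E]
      (F : ℝ × X → E), ContDiffOn ℝ ∞ F U →
      ContDiffOn ℝ m (fun x => ∫ t in (0 : ℝ)..1, F (t, x)) S from
    contDiffOn_infty.mpr fun m => h m F hF
  intro m
  induction m with
  | zero =>
    intro E _ _ F hF
    rw [Nat.cast_zero, contDiffOn_zero]
    exact fun x hx => (hasFDerivAt_integral_unitInterval hU (hF.of_le (by simp))
      (hSU x hx)).continuousAt.continuousWithinAt
  | succ m ih =>
    intro E _ _ F hF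
    have hderiv := fun x hx => hasFDerivAt_integral_unitInterval hU (hF.of_le (by simp))
      (hSU x hx)
    rw [Nat.cast_succ, contDiffOn_succ_iff_fderiv_of_isOpen hS]
    refine ⟨fun x hx => (hderiv x hx).differentiableAt.differentiableWithinAt, by simp, ?_⟩
    refine (ih _ ((hF.fderiv_of_isOpen hU (by simp)).clm_comp contDiffOn_const)).congr
      fun x hx => (hderiv x hx).fderiv

end ParametricIntegral

theorem exists_hadamard_decomposition {X E : Type*} [NormedAddCommGroup X] [NormedSpace ℝ X]
    [NormedAddCommGroup E] [NormedSpace ℝ E] [CompleteSpace E] {g : X → E} {s : Set X}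
    {y₀ : X} (hs : IsOpen s) (hs₀ : StarConvex ℝ y₀ s) (hg : ContDiffOn ℝ ∞ g s) :
    ∃ H : X → X →L[ℝ] E, ContDiffOn ℝ ∞ H s ∧ H y₀ = fderiv ℝ g y₀ ∧
      ∀ x ∈ s, g x = g y₀ + H x (x - y₀) := by
  set γ : ℝ × X → X := fun p => y₀ + p.1 • (p.2 - y₀)
  have hγ : ∀ x ∈ s, ∀ t ∈ Icc (0 : ℝ) 1, γ (t, x) ∈ s := fun x hx t ht =>
    hs₀.add_smul_sub_mem hx ht.1 ht.2
  have hg' : ContDiffOn ℝ ∞ (fderiv ℝ g) s := hg.fderiv_of_isOpen hs (by simp)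
  refine ⟨fun x => ∫ t in (0 : ℝ)..1, fderiv ℝ g (γ (t, x)), ?_, by simp [γ], ?_⟩
  · exact contDiffOn_integral_unitInterval (hs.preimage (by fun_prop))
      (hg'.comp (by fun_prop : ContDiff ℝ ∞ γ).contDiffOn fun _ hp => hp) hs hγ
  · intro x hx
    have hderiv : ∀ t ∈ uIcc (0 : ℝ) 1,
        HasDerivAt (fun t => g (γ (t, x))) (fderiv ℝ g (γ (t, x)) (x - y₀)) t := by
      intro t ht
      rw [uIcc_of_le zero_le_one] at ht
      have hline : HasDerivAt (fun t : ℝ => γ (t, x)) (x - y₀) t :=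
        (((hasDerivAt_id t).smul_const (x - y₀)).const_add y₀).congr_deriv (one_smul ℝ _)
      exact ((hg.differentiableOn (by simp) _ (hγ x hx t ht)).differentiableAt
        (hs.mem_nhds (hγ x hx t ht))).hasFDerivAt.comp_hasDerivAt t hline
    have hcont : ContinuousOn (fun p => fderiv ℝ g (γ p)) (γ ⁻¹' s) :=
      hg'.continuousOn.comp (by fun_prop : Continuous γ).continuousOn fun _ hp => hp
    rw [ContinuousLinearMap.intervalIntegral_apply
        (intervalIntegrable_unitInterval_slice hcont (hγ x hx)),
      intervalIntegral.integral_eq_sub_of_hasDerivAt hderiv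
        (intervalIntegrable_unitInterval_slice (hcont.clm_apply continuousOn_const) (hγ x hx))]
    simp [γ]

theorem ContDiffOn.contDiff_smul_of_tsupport_subset {X F : Type*} [NormedAddCommGroup X]
    [NormedSpace ℝ X] [NormedAddCommGroup F] [NormedSpace ℝ F] {φ : X → ℝ} {f : X → F}
    {s : Set X} {m : WithTop ℕ∞} (hf : ContDiffOn ℝ m f s) (hs : IsOpen s)
    (hφ : ContDiff ℝ m φ) (hφs : tsupport φ ⊆ s) : ContDiff ℝ m fun x => φ x • f x := by
  refine contDiff_iff_contDiffAt.mpr fun x => ?_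
  by_cases hx : x ∈ s
  · exact hφ.contDiffAt.smul (hf.contDiffAt (hs.mem_nhds hx))
  · refine (contDiffAt_const (c := (0 : F))).congr_of_eventuallyEq ?_
    filter_upwards [notMem_tsupport_iff_eventuallyEq.mp fun h => hx (hφs h)] with y hy
    simp [hy]

namespace MeasureTheory.Lp

variable {μ : Measure K}

theorem ae_norm_le_norm_top (f : Lp ℝ ⊤ μ) : ∀ᵐ k ∂μ, ‖f k‖ ≤ ‖f‖ := by
  have hfin : eLpNormEssSup f μ ≠ ⊤ := by
    rw [← eLpNorm_exponent_top]; exact eLpNorm_ne_top f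
  filter_upwards [ae_le_eLpNormEssSup (f := ⇑f) (μ := μ)] with k hk
  rw [Lp.norm_def, eLpNorm_exponent_top, ← toReal_enorm]
  exact ENNReal.toReal_mono hfin hk

theorem norm_le_of_ae_bound_top {f : Lp ℝ ⊤ μ} {C : ℝ} (hC : 0 ≤ C) (h : ∀ᵐ k ∂μ, ‖f k‖ ≤ C) : ‖f‖ ≤ C := by
  rw [Lp.norm_def, eLpNorm_exponent_top, ← ENNReal.toReal_ofReal hC]
  exact ENNReal.toReal_mono ENNReal.ofReal_ne_top (eLpNormEssSup_le_of_ae_bound h)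

theorem exists_ae_eq_comp_top (f : Lp ℝ ⊤ μ) {φ : ℝ → ℝ} (hφ : Continuous φ) :
    ∃ g : Lp ℝ ⊤ μ, g =ᵐ[μ] φ ∘ f := by
  obtain ⟨C, hC⟩ := (isCompact_Icc (a := -‖f‖) (b := ‖f‖)).exists_bound_of_continuousOn
    hφ.continuousOn
  have hφf : MemLp (φ ∘ f) ⊤ μ := by
    refine memLp_top_of_bound (hφ.comp_aestronglyMeasurable (Lp.aestronglyMeasurable f)) C ?_
    filter_upwards [ae_norm_le_norm_top f] with k hk
    exact hC _ (abs_le.mp hk)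
  exact ⟨hφf.toLp _, hφf.coeFn_toLp⟩

end MeasureTheory.Lp

theorem ae_eq_zero_of_forall_ae_abs_le_mul_sqrt {μ : Measure K} {g h : K → ℝ} {M : ℝ}
    (hg : ∀ᵐ k ∂μ, |g k| ≤ M) (hh : ∀ c : ℝ, ∃ C, ∀ᵐ k ∂μ, |h k| ≤ C * √|g k - c|) :
    h =ᵐ[μ] 0 := by
  choose C hC using hh
  have hsmall : ∀ η > 0, ∀ᵐ k ∂μ, |h k| < η := by
    intro η hη
    have hU : ∀ c ∈ Icc (-M) M, {x | C c * √|x - c| < η} ∈ 𝓝 c := fun c _ =>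
      ContinuousAt.eventually_lt (by fun_prop) continuousAt_const (by simpa using hη)
    obtain ⟨T, -, hT⟩ := isCompact_Icc.elim_nhds_subcover _ hU
    filter_upwards [hg, (eventually_all_finset T).2 fun c _ => hC c] with k hgk hk
    obtain ⟨c, hcT, hc⟩ := mem_iUnion₂.mp (hT (abs_le.mp hgk))
    exact (hk c hcT).trans_lt hc
  filter_upwards [ae_all_iff.2 fun m : ℕ => hsmall (1 / (m + 1)) Nat.one_div_pos_of_nat]
    with k hk
  by_contra hne
  obtain ⟨m, hm⟩ := exists_nat_one_div_lt (abs_pos.mpr hne)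
  exact (hk m).not_gt hm

def IsPointwiseMul {μ : Measure K} (mul : Lp ℝ ⊤ μ → Lp ℝ ⊤ μ → Lp ℝ ⊤ μ) : Prop :=
  ∀ u v : Lp ℝ ⊤ μ, ⇑(mul u v) =ᵐ[μ] fun k => u k * v k

namespace IsPointwiseMul

variable {μ : Measure K} {mul : Lp ℝ ⊤ μ → Lp ℝ ⊤ μ → Lp ℝ ⊤ μ} (hmul : IsPointwiseMul mul)
include hmul

theorem coe_mul (u v : Lp ℝ ⊤ μ) : (mul u v : K →ₘ[μ] ℝ) = u * v :=
  AEEqFun.ext ((hmul u v).trans (AEEqFun.coeFn_mul _ _).symm)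

theorem comm (u v : Lp ℝ ⊤ μ) : mul u v = mul v u :=
  Subtype.ext <| by simp only [hmul.coe_mul, mul_comm]

theorem assoc (u v w : Lp ℝ ⊤ μ) : mul (mul u v) w = mul u (mul v w) :=
  Subtype.ext <| by simp only [hmul.coe_mul, mul_assoc]

theorem one_mul [IsFiniteMeasure μ] (u : Lp ℝ ⊤ μ) : mul (Lp.const ⊤ μ 1) u = u :=
  Subtype.ext <| by rw [hmul.coe_mul, Lp.const_val]; exact _root_.one_mul _

theorem mul_one [IsFiniteMeasure μ] (u : Lp ℝ ⊤ μ) : mul u (Lp.const ⊤ μ 1) = u := by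
  rw [hmul.comm, hmul.one_mul]

theorem mul_add (u v w : Lp ℝ ⊤ μ) : mul u (v + w) = mul u v + mul u w := by
  refine Lp.ext ?_
  filter_upwards [hmul u (v + w), Lp.coeFn_add v w, hmul u v, hmul u w,
    Lp.coeFn_add (mul u v) (mul u w)] with k h₁ h₂ h₃ h₄ h₅
  simp only [h₁, h₂, h₃, h₄, h₅, Pi.add_apply, _root_.mul_add]

theorem mul_smul (c : ℝ) (u v : Lp ℝ ⊤ μ) : mul u (c • v) = c • mul u v := by
  refine Lp.ext ?_
  filter_upwards [hmul u (c • v), Lp.coeFn_smul c v, hmul u v, Lp.coeFn_smul c (mul u v)]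
    with k h₁ h₂ h₃ h₄
  simp only [h₁, h₂, h₃, h₄, Pi.smul_apply, smul_eq_mul, mul_left_comm]

theorem smul_one_mul [IsFiniteMeasure μ] (c : ℝ) (u : Lp ℝ ⊤ μ) :
    mul (c • Lp.const ⊤ μ 1) u = c • u := by
  rw [hmul.comm, hmul.mul_smul, hmul.comm, hmul.one_mul]

theorem norm_mul_le (u v : Lp ℝ ⊤ μ) : ‖mul u v‖ ≤ ‖u‖ * ‖v‖ := by
  refine Lp.norm_le_of_ae_bound_top (by positivity) ?_
  filter_upwards [hmul u v, Lp.ae_norm_le_norm_top u, Lp.ae_norm_le_norm_top v] with k h₁ h₂ h₃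
  rw [h₁, norm_mul]
  exact mul_le_mul h₂ h₃ (norm_nonneg _) (norm_nonneg _)

def toCLM : Lp ℝ ⊤ μ →L[ℝ] Lp ℝ ⊤ μ →L[ℝ] Lp ℝ ⊤ μ :=
  LinearMap.mkContinuous₂
    (LinearMap.mk₂ ℝ mul
      (fun u v w => by rw [hmul.comm, hmul.mul_add, hmul.comm u, hmul.comm v])
      (fun c u v => by rw [hmul.comm, hmul.mul_smul, hmul.comm])
      hmul.mul_add hmul.mul_smul)
    1 fun u v => by rw [_root_.one_mul]; exact hmul.norm_mul_le u v

@[simp]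
theorem toCLM_apply (u v : Lp ℝ ⊤ μ) : hmul.toCLM u v = mul u v := rfl

theorem mul_zero (u : Lp ℝ ⊤ μ) : mul u 0 = 0 := by
  simpa using (hmul.toCLM u).map_zero

theorem zero_mul (u : Lp ℝ ⊤ μ) : mul 0 u = 0 := by
  rw [hmul.comm, hmul.mul_zero]

theorem mul_sum {ι : Type*} (s : Finset ι) (u : Lp ℝ ⊤ μ) (v : ι → Lp ℝ ⊤ μ) :
    mul u (∑ i ∈ s, v i) = ∑ i ∈ s, mul u (v i) :=
  map_sum (hmul.toCLM u) v s

theorem mul_left_comm (u v w : Lp ℝ ⊤ μ) : mul u (mul v w) = mul v (mul u w) := by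
  rw [← hmul.assoc, hmul.comm u, hmul.assoc]

theorem derivation_one [IsFiniteMeasure μ] {D : Lp ℝ ⊤ μ → Lp ℝ ⊤ μ}
    (hleib : ∀ u v, D (mul u v) = mul u (D v) + mul v (D u)) : D (Lp.const ⊤ μ 1) = 0 := by
  simpa [hmul.one_mul] using hleib (Lp.const ⊤ μ 1) (Lp.const ⊤ μ 1)

theorem exists_mul_self_sub_mul_self_eq [IsFiniteMeasure μ] (f : Lp ℝ ⊤ μ) (c : ℝ) :
    ∃ s t : Lp ℝ ⊤ μ, mul s s - mul t t = f - c • Lp.const ⊤ μ 1 ∧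
      (∀ᵐ k ∂μ, |s k| ≤ √|f k - c|) ∧ ∀ᵐ k ∂μ, |t k| ≤ √|f k - c| := by
  obtain ⟨s, hs⟩ := Lp.exists_ae_eq_comp_top f (φ := fun x => √(max (x - c) 0)) (by fun_prop)
  obtain ⟨t, ht⟩ := Lp.exists_ae_eq_comp_top f (φ := fun x => √(max (c - x) 0)) (by fun_prop)
  refine ⟨s, t, Lp.ext ?_, ?_, ?_⟩
  · filter_upwards [hs, ht, hmul s s, hmul t t, Lp.coeFn_sub (mul s s) (mul t t),
      Lp.coeFn_sub f (c • Lp.const ⊤ μ (1 : ℝ)), Lp.coeFn_smul c (Lp.const ⊤ μ (1 : ℝ)),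
      Lp.coeFn_const ⊤ μ (1 : ℝ)] with k hsk htk hss htt h₁ h₂ h₃ h₄
    rw [h₁, h₂, Pi.sub_apply, Pi.sub_apply, hss, htt, h₃, Pi.smul_apply, h₄, hsk, htk]
    simp only [Function.comp_apply, Function.const_apply, smul_eq_mul, _root_.mul_one,
      Real.mul_self_sqrt (le_max_right _ _)]
    rcases le_total (f k) c with hfc | hfc
    · rw [max_eq_right (by linarith), max_eq_left (by linarith)]; ring
    · rw [max_eq_left (by linarith), max_eq_right (by linarith)]; ring
  · filter_upwards [hs] with k hk
    rw [hk, Function.comp_apply, abs_of_nonneg (Real.sqrt_nonneg _)]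
    exact Real.sqrt_le_sqrt (max_le (le_abs_self _) (abs_nonneg _))
  · filter_upwards [ht] with k hk
    rw [hk, Function.comp_apply, abs_of_nonneg (Real.sqrt_nonneg _), abs_sub_comm]
    exact Real.sqrt_le_sqrt (max_le (le_abs_self _) (abs_nonneg _))

theorem derivation_ae_abs_le [IsFiniteMeasure μ] {D : Lp ℝ ⊤ μ → Lp ℝ ⊤ μ}
    (hD : IsLinearMap ℝ D) (hleib : ∀ u v, D (mul u v) = mul u (D v) + mul v (D u))
    (f : Lp ℝ ⊤ μ) (c : ℝ) : ∃ C, ∀ᵐ k ∂μ, |D f k| ≤ C * √|f k - c| := by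
  obtain ⟨s, t, hst, hs, ht⟩ := hmul.exists_mul_self_sub_mul_self_eq f c
  have hDf : D f = (mul s (D s) + mul s (D s)) - (mul t (D t) + mul t (D t)) := by
    have h := congrArg D hst
    rwa [hD.map_sub, hD.map_sub, hD.map_smul, hmul.derivation_one hleib, smul_zero, sub_zero,
      hleib, hleib, eq_comm] at h
  refine ⟨2 * (‖D s‖ + ‖D t‖), ?_⟩
  filter_upwards [hs, ht, hmul s (D s), hmul t (D t), Lp.ae_norm_le_norm_top (D s),
    Lp.ae_norm_le_norm_top (D t),
    Lp.coeFn_sub (mul s (D s) + mul s (D s)) (mul t (D t) + mul t (D t)),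
    Lp.coeFn_add (mul s (D s)) (mul s (D s)), Lp.coeFn_add (mul t (D t)) (mul t (D t))]
    with k hsk htk hsD htD hDs hDt h₁ h₂ h₃
  rw [hDf, h₁, Pi.sub_apply, h₂, h₃, Pi.add_apply, Pi.add_apply, hsD, htD]
  rw [Real.norm_eq_abs] at hDs hDt
  calc |(s k * D s k + s k * D s k) - (t k * D t k + t k * D t k)|
      ≤ 2 * (|s k| * |D s k|) + 2 * (|t k| * |D t k|) := by
        rw [← abs_mul, ← abs_mul]
        linarith [abs_sub (s k * D s k + s k * D s k) (t k * D t k + t k * D t k),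
          abs_add_le (s k * D s k) (s k * D s k), abs_add_le (t k * D t k) (t k * D t k)]
    _ ≤ 2 * (√|f k - c| * ‖D s‖) + 2 * (√|f k - c| * ‖D t‖) := by gcongr
    _ = 2 * (‖D s‖ + ‖D t‖) * √|f k - c| := by ring

theorem derivation_eq_zero [IsFiniteMeasure μ] {D : Lp ℝ ⊤ μ → Lp ℝ ⊤ μ}
    (hD : IsLinearMap ℝ D) (hleib : ∀ u v, D (mul u v) = mul u (D v) + mul v (D u))
    (f : Lp ℝ ⊤ μ) : D f = 0 :=
  Lp.eq_zero_iff_ae_eq_zero.mpr <| ae_eq_zero_of_forall_ae_abs_le_mul_sqrt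
    (Lp.ae_norm_le_norm_top f) (hmul.derivation_ae_abs_le hD hleib f)

end IsPointwiseMul

section SmoothMaps

variable {μ : Measure K} {V : Set (Fin n → ℝ)}

theorem extZero_of_mem (a : V → Lp ℝ ⊤ μ) {x : Fin n → ℝ} (hx : x ∈ V) :
    extZero V a x = a ⟨x, hx⟩ :=
  dif_pos hx

theorem extZero_coe (a : V → Lp ℝ ⊤ μ) (x : V) : extZero V a x = a x :=
  extZero_of_mem a x.2

theorem extZero_smul_add (c : ℝ) (a b : V → Lp ℝ ⊤ μ) :
    extZero V (c • a + b) = c • extZero V a + extZero V b := by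
  funext x
  by_cases hx : x ∈ V <;> simp [extZero, hx]

theorem MemA.of_contDiffOn {a : V → Lp ℝ ⊤ μ} {f : (Fin n → ℝ) → Lp ℝ ⊤ μ}
    (hf : ContDiffOn ℝ ∞ f V) (h : ∀ x : V, a x = f x) : MemA V a :=
  hf.congr fun x hx => by rw [extZero_of_mem a hx, h]

theorem memA_const (u : Lp ℝ ⊤ μ) : MemA V fun _ => u :=
  .of_contDiffOn contDiffOn_const fun _ => rfl

theorem MemA.smul_add {a b : V → Lp ℝ ⊤ μ} (c : ℝ) (ha : MemA V a) (hb : MemA V b) :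
    MemA V (c • a + b) := by
  unfold MemA
  rw [extZero_smul_add]
  exact (ha.const_smul c).add hb

variable (μ V) in
def submoduleA : Submodule ℝ (V → Lp ℝ ⊤ μ) where
  carrier := {a | MemA V a}
  add_mem' {a b} ha hb := by simpa using MemA.smul_add 1 ha hb
  zero_mem' := memA_const 0
  smul_mem' c a ha := by
    simpa using ha.smul_add c (show MemA V (0 : V → Lp ℝ ⊤ μ) from memA_const 0)

theorem MemA.differentiableAt (hV : IsOpen V) {a : V → Lp ℝ ⊤ μ} (ha : MemA V a) (x : V) :
    DifferentiableAt ℝ (extZero V a) x :=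
  (ha.contDiffAt (hV.mem_nhds x.2)).differentiableAt (by simp)

theorem partialD_eq_fderiv (hV : IsOpen V) {a : V → Lp ℝ ⊤ μ} {f : (Fin n → ℝ) → Lp ℝ ⊤ μ}
    (h : ∀ x : V, a x = f x) (i : Fin n) (x : V) :
    partialD V i a x = fderiv ℝ f x (Pi.single i 1) := by
  have hEq : extZero V a =ᶠ[𝓝 (x : Fin n → ℝ)] f :=
    Filter.eventuallyEq_of_mem (hV.mem_nhds x.2) fun y hy => by rw [extZero_of_mem a hy, h]
  rw [partialD, hEq.fderiv_eq]

theorem MemA.partialD (hV : IsOpen V) {a : V → Lp ℝ ⊤ μ} (ha : MemA V a) (i : Fin n) :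
    MemA V (partialD V i a) :=
  .of_contDiffOn ((ha.fderiv_of_isOpen hV (by simp)).clm_apply contDiffOn_const) fun _ => rfl

theorem partialD_smul_add (hV : IsOpen V) {a b : V → Lp ℝ ⊤ μ} (ha : MemA V a)
    (hb : MemA V b) (c : ℝ) (i : Fin n) (x : V) :
    partialD V i (c • a + b) x = c • partialD V i a x + partialD V i b x := by
  have hda := ha.differentiableAt hV x
  simp only [partialD, extZero_smul_add, fderiv_add (hda.const_smul c) (hb.differentiableAt hV x),
    fderiv_const_smul hda, add_apply, smul_apply]

variable [IsProbabilityMeasure μ]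

theorem coordFn_eq (i : Fin n) (x : V) :
    coordFn μ V i x =
      (ContinuousLinearMap.proj (R := ℝ) (φ := fun _ : Fin n => ℝ) i).smulRight
        (Lp.const ⊤ μ (1 : ℝ)) (x : Fin n → ℝ) :=
  rfl

theorem memA_coordFn (i : Fin n) : MemA V (coordFn μ V i) :=
  .of_contDiffOn (ContinuousLinearMap.contDiff _).contDiffOn (coordFn_eq i)

theorem partialD_coordFn (hV : IsOpen V) (i j : Fin n) (x : V) :
    partialD V j (coordFn μ V i) x = ((Pi.single i 1 : Fin n → ℝ) j) • Lp.const ⊤ μ (1 : ℝ) := by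
  rw [partialD_eq_fderiv hV (coordFn_eq i), ContinuousLinearMap.fderiv]
  simp [Pi.single_apply, eq_comm]

end SmoothMaps

def sumMulPartialD {μ : Measure K} {V : Set (Fin n → ℝ)} (mul : Lp ℝ ⊤ μ → Lp ℝ ⊤ μ → Lp ℝ ⊤ μ)
    (c : Fin n → V → Lp ℝ ⊤ μ) (a : V → Lp ℝ ⊤ μ) : V → Lp ℝ ⊤ μ :=
  fun x => ∑ i, mul (c i x) (partialD V i a x)

namespace IsPointwiseMul

variable {μ : Measure K} {V : Set (Fin n → ℝ)} {mul : Lp ℝ ⊤ μ → Lp ℝ ⊤ μ → Lp ℝ ⊤ μ}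
  (hmul : IsPointwiseMul mul)
include hmul

theorem memA_mul {a b : V → Lp ℝ ⊤ μ} (ha : MemA V a) (hb : MemA V b) :
    MemA V fun x => mul (a x) (b x) :=
  .of_contDiffOn (hmul.toCLM.isBoundedBilinearMap.contDiff.comp_contDiffOn (ha.prodMk hb))
    fun x => by simp [extZero_coe]

theorem partialD_mul (hV : IsOpen V) {a b : V → Lp ℝ ⊤ μ} (ha : MemA V a) (hb : MemA V b)
    (i : Fin n) (x : V) :
    partialD V i (fun y => mul (a y) (b y)) x =
      mul (a x) (partialD V i b x) + mul (b x) (partialD V i a x) := by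
  rw [partialD_eq_fderiv hV (f := fun y => hmul.toCLM (extZero V a y) (extZero V b y))
      (fun x => by simp [extZero_coe]),
    hmul.toCLM.fderiv_of_bilinear (ha.differentiableAt hV x) (hb.differentiableAt hV x)]
  simp [partialD, extZero_coe, hmul.comm (b x)]

theorem isDerivationA_sumMulPartialD (hV : IsOpen V) {c : Fin n → V → Lp ℝ ⊤ μ}
    (hc : ∀ i, MemA V (c i)) : IsDerivationA V mul (sumMulPartialD mul c) := by
  refine ⟨fun a ha => ?_, fun a b ha hb r => ?_, fun a b ha hb => ?_⟩
  · have h := (submoduleA μ V).sum_mem fun i (_ : i ∈ Finset.univ) =>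
      hmul.memA_mul (hc i) (ha.partialD hV i)
    rwa [Finset.sum_fn] at h
  · funext x
    simp only [sumMulPartialD, Pi.add_apply, Pi.smul_apply, partialD_smul_add hV ha hb,
      hmul.mul_add, hmul.mul_smul, Finset.smul_sum, Finset.sum_add_distrib]
  · funext x
    simp only [sumMulPartialD, hmul.partialD_mul hV ha hb, hmul.mul_add, hmul.mul_sum,
      Finset.sum_add_distrib, hmul.mul_left_comm (c _ x)]

theorem sumMulPartialD_coordFn [IsProbabilityMeasure μ] (hV : IsOpen V)
    (c : Fin n → V → Lp ℝ ⊤ μ) (i : Fin n) : sumMulPartialD mul c (coordFn μ V i) = c i := by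
  funext x
  simp only [sumMulPartialD, partialD_coordFn hV, hmul.mul_smul, hmul.mul_one]
  simp [Pi.single_apply]

end IsPointwiseMul

section LocalHadamard

variable {μ : Measure K} {V : Set (Fin n → ℝ)}

theorem exists_memA_hadamard (hV : IsOpen V) {a : V → Lp ℝ ⊤ μ} (ha : MemA V a) (x₀ : V) :
    ∃ b : Fin n → V → Lp ℝ ⊤ μ, (∀ i, MemA V (b i)) ∧ (∀ i, b i x₀ = partialD V i a x₀) ∧
      ∃ r > 0, ∀ x : V, dist (x : Fin n → ℝ) x₀ < r →
        a x = a x₀ + ∑ i, ((x : Fin n → ℝ) i - (x₀ : Fin n → ℝ) i) • b i x := by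
  obtain ⟨ε, hε, hball⟩ := Metric.isOpen_iff.mp hV _ x₀.2
  obtain ⟨H, hH, hH₀, hHa⟩ := exists_hadamard_decomposition isOpen_ball
    ((convex_ball _ ε).starConvex (mem_ball_self hε)) (ha.mono hball)
  -- cut `H` off inside the ball, so that the coefficients are defined on all of `V`
  let φ : ContDiffBump (x₀ : Fin n → ℝ) := ⟨ε / 3, ε / 2, by positivity, by linarith⟩
  have hφ : tsupport φ ⊆ ball (x₀ : Fin n → ℝ) ε := by
    rw [φ.tsupport_eq]; exact closedBall_subset_ball (by simp [φ]; linarith)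
  refine ⟨fun i x => φ x • H x (Pi.single i 1), fun i => ?_, fun i => ?_, ε / 3, by positivity,
    fun x hx => ?_⟩
  · exact .of_contDiffOn ((hH.clm_apply contDiffOn_const).contDiff_smul_of_tsupport_subset
      isOpen_ball φ.contDiff hφ).contDiffOn fun _ => rfl
  · show φ x₀ • H x₀ (Pi.single i 1) = _
    rw [φ.one_of_mem_closedBall (mem_closedBall_self (by positivity)), one_smul, hH₀]
    rfl
  · have hxε : (x : Fin n → ℝ) ∈ ball (x₀ : Fin n → ℝ) ε := by
      rw [mem_ball]; linarith
    simp only [φ.one_of_mem_closedBall (mem_closedBall.mpr hx.le), one_smul]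
    rw [← extZero_coe a x, hHa x hxε, extZero_coe]
    conv_lhs => rw [pi_eq_sum_univ' ((x : Fin n → ℝ) - (x₀ : Fin n → ℝ))]
    simp only [map_sum, map_smul, Pi.sub_apply]

end LocalHadamard

namespace IsDerivationA

variable {μ : Measure K} {V : Set (Fin n → ℝ)} {mul : Lp ℝ ⊤ μ → Lp ℝ ⊤ μ → Lp ℝ ⊤ μ}
  {ξ : (V → Lp ℝ ⊤ μ) → (V → Lp ℝ ⊤ μ)} (hξ : IsDerivationA V mul ξ)
include hξ

theorem map_zero : ξ 0 = 0 := by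
  simpa using hξ.2.1 0 0 (submoduleA μ V).zero_mem (submoduleA μ V).zero_mem 1

theorem map_add {a b : V → Lp ℝ ⊤ μ} (ha : MemA V a) (hb : MemA V b) :
    ξ (a + b) = ξ a + ξ b := by
  simpa using hξ.2.1 a b ha hb 1

theorem map_smul (c : ℝ) {a : V → Lp ℝ ⊤ μ} (ha : MemA V a) : ξ (c • a) = c • ξ a := by
  simpa [hξ.map_zero] using hξ.2.1 a 0 ha (submoduleA μ V).zero_mem c

theorem map_sub {a b : V → Lp ℝ ⊤ μ} (ha : MemA V a) (hb : MemA V b) :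
    ξ (a - b) = ξ a - ξ b := by
  simpa [neg_add_eq_sub] using hξ.2.1 b a hb ha (-1)

theorem map_sum {ι : Type*} (s : Finset ι) {a : ι → V → Lp ℝ ⊤ μ} (ha : ∀ i ∈ s, MemA V (a i)) :
    ξ (∑ i ∈ s, a i) = ∑ i ∈ s, ξ (a i) := by
  classical
  induction s using Finset.induction_on with
  | empty => simpa using hξ.map_zero
  | insert i s hi ih =>
    rw [Finset.sum_insert hi, Finset.sum_insert hi, hξ.map_add (ha i (s.mem_insert_self i))
      ((submoduleA μ V).sum_mem fun j hj => ha j (s.mem_insert_of_mem hj)),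
      ih fun j hj => ha j (s.mem_insert_of_mem hj)]

variable (hmul : IsPointwiseMul mul)
include hmul

theorem mul_left {a : V → Lp ℝ ⊤ μ} (ha : MemA V a) :
    IsDerivationA V mul fun b x => mul (a x) (ξ b x) := by
  refine ⟨fun b hb => hmul.memA_mul ha (hξ.1 b hb), fun u v hu hv c => ?_, fun u v hu hv => ?_⟩
  · funext x
    simp only [hξ.2.1 u v hu hv c, Pi.add_apply, Pi.smul_apply, hmul.mul_add, hmul.mul_smul]
  · funext x
    simp only [hξ.2.2 u v hu hv, hmul.mul_add, hmul.mul_left_comm (a x)]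

section

variable [IsFiniteMeasure μ]

theorem apply_const (u : Lp ℝ ⊤ μ) (x₀ : V) : ξ (fun _ => u) x₀ = 0 :=
  hmul.derivation_eq_zero (D := fun u => ξ (fun _ => u) x₀)
    ⟨fun u v => congrFun (hξ.map_add (memA_const u) (memA_const v)) x₀,
      fun c u => congrFun (hξ.map_smul c (memA_const u)) x₀⟩
    (fun u v => congrFun (hξ.2.2 _ _ (memA_const u) (memA_const v)) x₀) u

theorem apply_eq_of_eq_near {a b : V → Lp ℝ ⊤ μ} (ha : MemA V a) (hb : MemA V b) {x₀ : V}
    {r : ℝ} (hr : 0 < r) (hab : ∀ x : V, dist (x : Fin n → ℝ) x₀ < r → a x = b x) :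
    ξ a x₀ = ξ b x₀ := by
  -- a cutoff `ψ` with `ψ x₀ = 1` and `ψ (a - b) = 0` gives `ξ (a - b) x₀ = 0` by Leibniz
  let φ : ContDiffBump (x₀ : Fin n → ℝ) := ⟨r / 2, r, half_pos hr, half_lt_self hr⟩
  let ψ : V → Lp ℝ ⊤ μ := fun x => φ x • Lp.const ⊤ μ 1
  have hψ : MemA V ψ := .of_contDiffOn (φ.contDiff.smul contDiff_const).contDiffOn fun _ => rfl
  have hprod : (fun x => mul (ψ x) ((a - b) x)) = 0 := by
    funext x
    by_cases hx : dist (x : Fin n → ℝ) x₀ < r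
    · simp [hab x hx, hmul.mul_zero]
    · simp [ψ, φ.zero_of_le_dist (not_lt.mp hx), hmul.zero_mul]
  have h := congrFun (hξ.2.2 ψ (a - b) hψ ((submoduleA μ V).sub_mem ha hb)) x₀
  rw [hprod, hξ.map_zero, hξ.map_sub ha hb] at h
  have hψ₀ : ψ x₀ = Lp.const ⊤ μ 1 := by
    simp [ψ, φ.one_of_mem_closedBall (mem_closedBall_self (half_pos hr).le)]
  simp only [Pi.zero_apply, Pi.sub_apply, hψ₀, hmul.one_mul, hab x₀ (by simpa using hr),
    sub_self, hmul.zero_mul, add_zero] at h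
  exact (sub_eq_zero.mp h.symm)

end

theorem eq_sumMulPartialD [IsProbabilityMeasure μ] (hV : IsOpen V) {a : V → Lp ℝ ⊤ μ}
    (ha : MemA V a) : ξ a = sumMulPartialD mul (fun i => ξ (coordFn μ V i)) a := by
  funext x₀
  obtain ⟨b, hb, hb₀, r, hr, hab⟩ := exists_memA_hadamard hV ha x₀
  set d : Fin n → V → Lp ℝ ⊤ μ := fun i => coordFn μ V i - fun _ => coordFn μ V i x₀
  have hd : ∀ i, MemA V (d i) := fun i =>
    (submoduleA μ V).sub_mem (memA_coordFn i) (memA_const _)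
  have hdb : ∀ i ∈ Finset.univ, MemA V fun x => mul (d i x) (b i x) := fun i _ =>
    hmul.memA_mul (hd i) (hb i)
  have hsum := (submoduleA μ V).sum_mem hdb
  have hloc : ξ a x₀ = ξ ((fun _ => a x₀) + ∑ i, fun x => mul (d i x) (b i x)) x₀ := by
    refine hξ.apply_eq_of_eq_near hmul ha (add_mem (memA_const _) hsum) hr fun x hx => ?_
    simp [hab x hx, d, coordFn, ← sub_smul, hmul.smul_one_mul]
  rw [hloc, hξ.map_add (memA_const _) hsum, hξ.map_sum _ hdb, Pi.add_apply,
    hξ.apply_const hmul, zero_add, Finset.sum_apply]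
  refine Finset.sum_congr rfl fun i _ => ?_
  have hd₀ : d i x₀ = 0 := sub_self _
  rw [hξ.2.2 _ _ (hd i) (hb i)]
  dsimp only
  rw [hd₀, hmul.zero_mul, zero_add, hb₀,
    hξ.map_sub (memA_coordFn i) (memA_const _), Pi.sub_apply, hξ.apply_const hmul, sub_zero,
    hmul.comm]

end IsDerivationA

/-- Every derivation `ξ` of `A(V⊗K)` satisfies `ξ(a) = ∑ᵢ ξ(xᵢ) · ∂ᵢa`, and the map
`ξ ↦ (ξ(x₁), …, ξ(xₙ))` is an isomorphism of `A(V⊗K)`-modules from the module of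
derivations of `A(V⊗K)` onto `A(V⊗K)ⁿ` (it is injective and surjective onto the smooth
`n`-tuples); in particular the module of derivations is free of rank `n` over `A(V⊗K)`
with basis the partial derivatives `∂₁, …, ∂ₙ`. -/
theorem derivations_of_trivial_random_manifold_free
    (μ : Measure K) [IsProbabilityMeasure μ]
    (V : Set (Fin n → ℝ)) (hV : IsOpen V)
    (mul : Lp ℝ ⊤ μ → Lp ℝ ⊤ μ → Lp ℝ ⊤ μ)
    (hmul : ∀ u v : Lp ℝ ⊤ μ, ⇑(mul u v) =ᵐ[μ] fun k => u k * v k) :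
    -- the formula `ξ(a) = ∑ᵢ ξ(xᵢ) · ∂ᵢa`
    (∀ ξ, IsDerivationA V mul ξ → ∀ a, MemA V a →
      ξ a = fun x => ∑ i, mul (ξ (coordFn μ V i) x) (partialD V i a x)) ∧
    -- injectivity of `ξ ↦ (ξ(x₁), …, ξ(xₙ))` on derivations
    (∀ ξ ζ, IsDerivationA V mul ξ → IsDerivationA V mul ζ →
      (∀ i, ξ (coordFn μ V i) = ζ (coordFn μ V i)) →
      ∀ a, MemA V a → ξ a = ζ a) ∧
    -- surjectivity onto `A(V⊗K)ⁿ`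
    (∀ c : Fin n → (V → Lp ℝ ⊤ μ), (∀ i, MemA V (c i)) →
      ∃ ξ, IsDerivationA V mul ξ ∧ ∀ i, ξ (coordFn μ V i) = c i) ∧
    -- `A(V⊗K)`-linearity of `ξ ↦ (ξ(x₁), …, ξ(xₙ))`: the module of derivations is
    -- stable under multiplication by elements of `A(V⊗K)`
    (∀ ξ a, IsDerivationA V mul ξ → MemA V a →
      IsDerivationA V mul (fun b x => mul (a x) (ξ b x))) := by
  have hmul : IsPointwiseMul mul := hmul
  refine ⟨fun ξ hξ a ha => hξ.eq_sumMulPartialD hmul hV ha, ?_,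
    fun c hc => ⟨_, hmul.isDerivationA_sumMulPartialD hV hc, hmul.sumMulPartialD_coordFn hV c⟩,
    fun ξ a hξ ha => hξ.mul_left hmul ha⟩
  intro ξ ζ hξ hζ hξζ a ha
  rw [hξ.eq_sumMulPartialD hmul hV ha, hζ.eq_sumMulPartialD hmul hV ha]
  simp only [hξζ]

end
end

section
/- Let X be a standard Borel space and let E be an equivalence relation on X whose graph {(x,y) : x E y} is a Borel subset of X × X and all of whose equivalence classes are finite. Then E admits a Borel fundamental domain: there exists a Borel set S ⊆ X that intersects every E-class in exactly one point, i.e. for every x ∈ X there is a unique y ∈ S with x E y. -/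
/-!
Fix a Borel injection `f : X → ℝ` and let `S` be the set of points that are `f`-minimal in their
class. Every class is finite, so it meets `S` in exactly one point. The complement of `S` is the
projection of the Borel set `{(x, y) | x E y, f y < f x}`, whose sections are finite, so it
suffices to know that such projections are Borel.

When the sections have at most `n` points this goes by induction on `n`: the projection of `B`
is the injective projection of the section-minimal points of `B`, hence Borel by Lusin–Souslin,
and the non-minimal points of `B` are the projection of a Borel set with sections of at most
`n - 1` points. In general, the analytic sets `{y | n ≤ #B_y}` have empty intersection, so
Novikov's separation theorem covers the base by countably many Borel pieces on which the section
sizes are bounded.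
-/

open Set Function PiNat MeasureTheory Topology

theorem Set.le_encard_iff_exists_injective {α : Type*} {s : Set α} {n : ℕ} :
    (n : ℕ∞) ≤ s.encard ↔ ∃ v : Fin n → α, Injective v ∧ ∀ i, v i ∈ s := by
  constructor
  · intro h
    obtain ⟨t, hts, htn⟩ := exists_subset_encard_eq h
    have : Finite t := finite_of_encard_eq_coe htn
    have hcard : Nat.card t = n := by
      rw [Nat.card_coe_set_eq, ← ENat.natCast_inj, Finite.cast_ncard_eq (toFinite t), htn]
    let e := Finite.equivFinOfCardEq hcard
    exact ⟨fun i => e.symm i, Subtype.val_injective.comp e.symm.injective,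
      fun i => hts (e.symm i).2⟩
  · rintro ⟨v, hv, hvs⟩
    calc (n : ℕ∞) = ENat.card (Fin n) := by simp
      _ ≤ (range v).encard := hv.encard_range
      _ ≤ s.encard := encard_le_encard (range_subset_iff.2 hvs)

theorem measurableSet_setOf_injective {ι X : Type*} [Countable ι] [MeasurableSpace X]
    [MeasurableEq X] : MeasurableSet {v : ι → X | Injective v} := by
  have : {v : ι → X | Injective v} = ⋂ (i) (j) (_ : i ≠ j), {v | v i = v j}ᶜ := by
    ext v
    simp [injective_iff_pairwise_ne, Pairwise]
  rw [this]
  exact .iInter fun i => .iInter fun j => .iInter fun _ =>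
    (measurableSet_eq_fun (measurable_pi_apply i) (measurable_pi_apply j)).compl

namespace PiNat

variable {E : ℕ → Type*}

theorem exists_forall_mem_cylinder_of_succ_mem {z : ℕ → ∀ n, E n}
    (hz : ∀ t, z (t + 1) ∈ cylinder (z t) t) : ∃ y, ∀ t, y ∈ cylinder (z t) t := by
  have hnested : ∀ t s, t ≤ s → z s ∈ cylinder (z t) t := by
    intro t s hts
    induction s, hts using Nat.le_induction with
    | base => exact self_mem_cylinder _ _
    | succ s hts ih => exact mem_cylinder_iff_eq.1 ih ▸ cylinder_anti _ hts (hz s)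
  exact ⟨fun i => z (i + 1) i, fun t => mem_cylinder_iff.2 fun i hi =>
    (mem_cylinder_iff.1 (hnested (i + 1) t hi) i (lt_add_one i)).symm⟩

theorem exists_cylinder_subset_of_mem_nhds [∀ n, TopologicalSpace (E n)]
    [∀ n, DiscreteTopology (E n)] {x : ∀ n, E n} {U : Set (∀ n, E n)} (hU : U ∈ 𝓝 x) :
    ∃ m, cylinder x m ⊆ U := by
  obtain ⟨_, ⟨z, m, rfl⟩, hx, hU⟩ := (isTopologicalBasis_cylinders E).mem_nhds_iff.1 hU
  exact ⟨m, mem_cylinder_iff_eq.1 hx ▸ hU⟩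

end PiNat

section Separation

variable {α : Type*} [MeasurableSpace α]

def MeasurablySeparableSeq (s : ℕ → Set α) : Prop :=
  ∃ t : ℕ → Set α, (∀ n, s n ⊆ t n) ∧ (∀ n, MeasurableSet (t n)) ∧ ⋂ n, t n = ∅

namespace MeasurablySeparableSeq

theorem of_measurablySeparable {s : ℕ → Set α} {i j : ℕ}
    (h : MeasurablySeparable (s i) (s j)) : MeasurablySeparableSeq s := by
  classical
  obtain ⟨u, hsu, hdisj, hu⟩ := h
  refine ⟨fun n => (if n = i then u else univ) ∩ (if n = j then uᶜ else univ),
    fun n => subset_inter ?_ ?_, fun n => ?_, ?_⟩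
  · split_ifs with hn
    exacts [hn ▸ hsu, subset_univ _]
  · split_ifs with hn
    exacts [hn ▸ hdisj.subset_compl_right, subset_univ _]
  · exact .inter (by split_ifs; exacts [hu, .univ]) (by split_ifs; exacts [hu.compl, .univ])
  · refine eq_empty_of_forall_notMem fun x hx => ?_
    have hi := (mem_iInter.1 hx i).1
    have hj := (mem_iInter.1 hx j).2
    simp only [if_true] at hi hj
    exact hj hi

theorem of_subset_iUnion {s u : ℕ → Set α} {k : ℕ} (hk : s k ⊆ ⋃ i, u i)
    (h : ∀ i, MeasurablySeparableSeq (update s k (u i))) : MeasurablySeparableSeq s := by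
  choose t hst ht hempty using h
  refine ⟨update (fun n => ⋂ i, t i n) k (⋃ i, t i k), fun n => ?_, fun n => ?_, ?_⟩
  · rcases eq_or_ne n k with rfl | hn
    · simpa using hk.trans (iUnion_mono fun i => by simpa using hst i n)
    · simpa [hn] using fun i => by simpa [hn] using hst i n
  · rcases eq_or_ne n k with rfl | hn
    · simpa using MeasurableSet.iUnion fun i => ht i n
    · simpa [hn] using MeasurableSet.iInter fun i => ht i n
  · refine eq_empty_of_forall_notMem fun x hx => ?_
    rw [mem_iInter] at hx
    obtain ⟨i, hi⟩ := mem_iUnion.1 (by simpa using hx k)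
    have : x ∈ ⋂ n, t i n := mem_iInter.2 fun n => by
      rcases eq_or_ne n k with rfl | hn
      · exact hi
      · exact mem_iInter.1 (by simpa [hn] using hx n) i
    simp [hempty i] at this

end MeasurablySeparableSeq

variable {f : ℕ → (ℕ → ℕ) → α}

theorem exists_mem_cylinder_not_measurablySeparableSeq {x : ℕ → ℕ → ℕ} {ℓ : ℕ → ℕ}
    (h : ¬MeasurablySeparableSeq fun n => f n '' cylinder (x n) (ℓ n)) (k : ℕ) :
    ∃ z ∈ cylinder (x k) (ℓ k), ¬MeasurablySeparableSeq fun n =>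
      f n '' cylinder (update x k z n) (update ℓ k (ℓ k + 1) n) := by
  contrapose! h
  refine MeasurablySeparableSeq.of_subset_iUnion (k := k)
    (u := fun i => f k '' cylinder (update (x k) (ℓ k) i) (ℓ k + 1)) ?_ fun i => ?_
  · rw [← image_iUnion, iUnion_cylinder_update (x k) (ℓ k)]
  · convert h _ (update_mem_cylinder _ _ i) using 2 with n
    rcases eq_or_ne n k with rfl | hn <;> simp [*]

theorem exists_forall_mem_cylinder_not_measurablySeparableSeq {x : ℕ → ℕ → ℕ} {ℓ : ℕ → ℕ}
    (h : ¬MeasurablySeparableSeq fun n => f n '' cylinder (x n) (ℓ n)) (m : ℕ) :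
    ∃ x' : ℕ → ℕ → ℕ, (∀ n, x' n ∈ cylinder (x n) (ℓ n)) ∧ ¬MeasurablySeparableSeq fun n =>
      f n '' cylinder (x' n) (ℓ n + if n < m then 1 else 0) := by
  induction m with
  | zero => exact ⟨x, fun n => self_mem_cylinder _ _, by simpa using h⟩
  | succ m ih =>
    obtain ⟨x', hx', h'⟩ := ih
    obtain ⟨z, hz, h''⟩ := exists_mem_cylinder_not_measurablySeparableSeq h' m
    refine ⟨update x' m z, fun n => ?_, ?_⟩
    · rcases eq_or_ne n m with rfl | hn
      · simpa [mem_cylinder_iff_eq.1 (hx' n)] using hz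
      · simpa [hn] using hx' n
    · convert h'' using 4 with n
      rcases lt_trichotomy n m with hn | rfl | hn
      · simp [hn, hn.ne, hn.trans (lt_add_one m)]
      · simp
      · simp [hn.ne', hn.not_gt, hn.not_ge]

theorem exists_forall_not_measurablySeparableSeq_cylinder
    (h : ¬MeasurablySeparableSeq fun n => range (f n)) :
    ∃ y : ℕ → ℕ → ℕ, ∀ t, ¬MeasurablySeparableSeq fun n => f n '' cylinder (y n) (t - n) := by
  -- At stage `t` the `n`-th cylinder has length `t - n`: each stage refines finitely many
  -- coordinates, and every coordinate is refined at all late enough stages.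
  have step : ∀ t (x : ℕ → ℕ → ℕ),
      (¬MeasurablySeparableSeq fun n => f n '' cylinder (x n) (t - n)) →
      ∃ x' : ℕ → ℕ → ℕ, (∀ n, x' n ∈ cylinder (x n) (t - n)) ∧
        ¬MeasurablySeparableSeq fun n => f n '' cylinder (x' n) (t + 1 - n) := by
    intro t x hx
    obtain ⟨x', hx', h'⟩ := exists_forall_mem_cylinder_not_measurablySeparableSeq hx (t + 1)
    refine ⟨x', hx', ?_⟩
    convert h' using 4 with n
    congr 1
    split_ifs <;> omega
  choose! next hnext using step
  let x : ℕ → ℕ → ℕ → ℕ := fun t => Nat.rec (fun _ _ => 0) (fun t xt => next t xt) t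
  have hx : ∀ t, ¬MeasurablySeparableSeq fun n => f n '' cylinder (x t n) (t - n) := by
    intro t
    induction t with
    | zero => simpa [cylinder_zero] using h
    | succ t ih => exact (hnext t _ ih).2
  choose y hy using fun n =>
    exists_forall_mem_cylinder_of_succ_mem (z := fun s => x (s + n) n) fun s => by
      simpa [Nat.add_right_comm s 1 n] using (hnext (s + n) _ (hx (s + n))).1 n
  refine ⟨y, fun t => ?_⟩
  convert hx t using 4 with n
  rcases le_or_gt n t with hnt | htn
  · obtain ⟨s, rfl⟩ := Nat.exists_eq_add_of_le' hnt
    simpa using mem_cylinder_iff_eq.1 (hy n s)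
  · simp [Nat.sub_eq_zero_of_le htn.le, cylinder_zero]

variable [TopologicalSpace α] [T2Space α] [OpensMeasurableSpace α]

theorem eq_of_forall_not_measurablySeparableSeq_cylinder (hf : ∀ n, Continuous (f n))
    {y : ℕ → ℕ → ℕ} (hy : ∀ t, ¬MeasurablySeparableSeq fun n => f n '' cylinder (y n) (t - n))
    (n : ℕ) : f n (y n) = f 0 (y 0) := by
  by_contra hne
  obtain ⟨u, v, hu, hv, hnu, h0v, huv⟩ := t2_separation hne
  obtain ⟨m, hm⟩ := exists_cylinder_subset_of_mem_nhds
    ((hf n).continuousAt.preimage_mem_nhds (hu.mem_nhds hnu))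
  obtain ⟨m₀, hm₀⟩ := exists_cylinder_subset_of_mem_nhds
    ((hf 0).continuousAt.preimage_mem_nhds (hv.mem_nhds h0v))
  refine hy (m + m₀ + n) (.of_measurablySeparable (i := n) (j := 0) ⟨u, ?_, ?_, hu.measurableSet⟩)
  · exact image_subset_iff.2 ((cylinder_anti _ (by omega)).trans hm)
  · exact huv.symm.mono_left (image_subset_iff.2 ((cylinder_anti _ (by omega)).trans hm₀))

theorem measurablySeparableSeq_range_of_iInter_eq_empty (hf : ∀ n, Continuous (f n))
    (h : ⋂ n, range (f n) = ∅) : MeasurablySeparableSeq fun n => range (f n) := by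
  by_contra hsep
  obtain ⟨y, hy⟩ := exists_forall_not_measurablySeparableSeq_cylinder hsep
  have : f 0 (y 0) ∈ ⋂ n, range (f n) :=
    mem_iInter.2 fun n => ⟨y n, eq_of_forall_not_measurablySeparableSeq_cylinder hf hy n⟩
  simp [h] at this

/-- **Novikov's separation theorem**. -/
theorem MeasureTheory.AnalyticSet.measurablySeparableSeq {s : ℕ → Set α}
    (hs : ∀ n, AnalyticSet (s n)) (h : ⋂ n, s n = ∅) : MeasurablySeparableSeq s := by
  by_cases hempty : ∃ k, s k = ∅
  · obtain ⟨k, hk⟩ := hempty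
    exact .of_measurablySeparable (i := k) (j := k) ⟨∅, hk.subset, by simp, .empty⟩
  simp only [not_exists] at hempty
  simp only [AnalyticSet, hempty, false_or] at hs
  choose f hf hfs using hs
  obtain rfl : s = fun n => range (f n) := funext fun n => (hfs n).symm
  exact measurablySeparableSeq_range_of_iInter_eq_empty hf h

end Separation

section LowerInSection

variable {X Y : Type*}

/-- Its first projection is the set of points of `B` that are not `f`-minimal in their section. -/
def lowerInSection (f : X → ℝ) (B : Set (Y × X)) : Set ((Y × X) × X) :=
  {q | q.1 ∈ B ∧ (q.1.1, q.2) ∈ B ∧ f q.2 < f q.1.2}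

variable {f : X → ℝ} {B : Set (Y × X)}

theorem measurableSet_lowerInSection [MeasurableSpace X] [MeasurableSpace Y] (hf : Measurable f)
    (hB : MeasurableSet B) : MeasurableSet (lowerInSection f B) :=
  (hB.preimage measurable_fst).inter <|
    (hB.preimage ((measurable_fst.comp measurable_fst).prodMk measurable_snd)).inter <|
      measurableSet_lt (hf.comp measurable_snd) (hf.comp (measurable_snd.comp measurable_fst))

theorem mem_diff_image_fst_lowerInSection {p : Y × X} :
    p ∈ B \ Prod.fst '' lowerInSection f B ↔ p ∈ B ∧ ∀ z, (p.1, z) ∈ B → f p.2 ≤ f z := by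
  simp only [lowerInSection, mem_sdiff, mem_image, mem_ofPred_eq, Prod.exists, exists_and_right,
    exists_eq_right, not_exists, not_and, not_lt]
  exact and_congr_right fun hp => by simp only [hp, true_implies]

theorem encard_preimage_lowerInSection_le {n : ℕ}
    (hB : ∀ y, (Prod.mk y ⁻¹' B).encard ≤ n + 1) (a : Y × X) :
    (Prod.mk a ⁻¹' lowerInSection f B).encard ≤ n := by
  by_cases ha : a ∈ B
  · have hsub : Prod.mk a ⁻¹' lowerInSection f B ⊆ Prod.mk a.1 ⁻¹' B \ {a.2} :=
      fun z ⟨_, hz, hlt⟩ => ⟨hz, fun h => hlt.ne (congrArg f h)⟩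
    have hcard := encard_sdiff_singleton_add_one (s := Prod.mk a.1 ⁻¹' B) ha
    refine (encard_le_encard hsub).trans ((ENat.add_le_add_iff_right ENat.one_ne_top).1 ?_)
    exact hcard ▸ hB a.1
  · have : Prod.mk a ⁻¹' lowerInSection f B = ∅ :=
      eq_empty_of_forall_notMem fun z hz => ha hz.1
    simp [this]

theorem image_fst_diff_image_fst_lowerInSection (hB : ∀ y, (Prod.mk y ⁻¹' B).Finite) :
    Prod.fst '' (B \ Prod.fst '' lowerInSection f B) = Prod.fst '' B := by
  refine (image_mono sdiff_subset).antisymm ?_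
  rintro y ⟨p, hp, rfl⟩
  obtain ⟨x, hx, hmin⟩ := exists_min_image _ f (hB p.1) ⟨p.2, hp⟩
  exact ⟨(p.1, x), mem_diff_image_fst_lowerInSection.2 ⟨hx, hmin⟩, rfl⟩

theorem injOn_fst_diff_image_fst_lowerInSection (hf : Injective f) :
    InjOn Prod.fst (B \ Prod.fst '' lowerInSection f B) := by
  intro p hp q hq hpq
  rw [mem_diff_image_fst_lowerInSection] at hp hq
  refine Prod.ext hpq (hf (le_antisymm (hp.2 _ ?_) (hq.2 _ ?_)))
  · rw [hpq]; exact hq.1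
  · rw [← hpq]; exact hp.1

end LowerInSection

universe u

theorem MeasurableSet.image_fst_of_encard_le {X Y : Type u} [MeasurableSpace X]
    [StandardBorelSpace X] [MeasurableSpace Y] [StandardBorelSpace Y] {B : Set (Y × X)}
    (hB : MeasurableSet B) {n : ℕ} (hcard : ∀ y, (Prod.mk y ⁻¹' B).encard ≤ n) :
    MeasurableSet (Prod.fst '' B) := by
  obtain ⟨f, hf⟩ := exists_measurableEmbedding_real (α := X)
  induction n generalizing Y with
  | zero =>
    have : B = ∅ := eq_empty_of_forall_notMem fun p hp =>
      (encard_eq_zero.1 (nonpos_iff_eq_zero.1 (hcard p.1))).subset hp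
    simp [this]
  | succ n ih =>
    have hfin : ∀ y, (Prod.mk y ⁻¹' B).Finite := fun y =>
      finite_of_encard_le_coe (hcard y)
    rw [← image_fst_diff_image_fst_lowerInSection (f := f) hfin]
    refine (hB.diff ?_).image_of_measurable_injOn measurable_fst
      (injOn_fst_diff_image_fst_lowerInSection hf.injective)
    exact ih (measurableSet_lowerInSection hf.measurable hB)
      (encard_preimage_lowerInSection_le (by exact_mod_cast hcard))

theorem MeasurableSet.image_fst_of_finite {X Y : Type u} [MeasurableSpace X]
    [StandardBorelSpace X] [MeasurableSpace Y] [StandardBorelSpace Y] {B : Set (Y × X)}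
    (hB : MeasurableSet B) (hfin : ∀ y, (Prod.mk y ⁻¹' B).Finite) :
    MeasurableSet (Prod.fst '' B) := by
  let := upgradeStandardBorel Y
  set A : ℕ → Set Y := fun n => {y | (n : ℕ∞) ≤ (Prod.mk y ⁻¹' B).encard}
  have hA : ∀ n, AnalyticSet (A n) := by
    intro n
    have : A n = Prod.fst '' {p : Y × (Fin n → X) | Injective p.2 ∧ ∀ i, (p.1, p.2 i) ∈ B} := by
      ext y
      simp [A, le_encard_iff_exists_injective]
    rw [this]
    refine MeasurableSet.analyticSet_image ?_ measurable_fst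
    simp only [ofPred_and, ofPred_forall]
    exact (measurableSet_setOf_injective.preimage measurable_snd).inter <|
      .iInter fun i =>
        hB.preimage (measurable_fst.prodMk ((measurable_pi_apply i).comp measurable_snd))
  have hAempty : ⋂ n, A n = ∅ := eq_empty_of_forall_notMem fun y hy =>
    (hfin y).encard_lt_top.ne (ENat.eq_top_iff_forall_ge.2 (mem_iInter.1 hy))
  obtain ⟨T, hAT, hT, hTempty⟩ := AnalyticSet.measurablySeparableSeq hA hAempty
  have hcover : B = ⋃ n, B ∩ Prod.fst ⁻¹' (T n)ᶜ := by
    rw [← inter_iUnion, ← preimage_iUnion, ← compl_iInter, hTempty, compl_empty, preimage_univ,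
      inter_univ]
  rw [hcover, image_iUnion]
  refine .iUnion fun n =>
    (hB.inter (measurable_fst (hT n).compl)).image_fst_of_encard_le (n := n) fun y => ?_
  by_cases hy : y ∈ T n
  · have : Prod.mk y ⁻¹' (B ∩ Prod.fst ⁻¹' (T n)ᶜ) = ∅ :=
      eq_empty_of_forall_notMem fun x hx => hx.2 hy
    rw [this, encard_empty]
    exact zero_le
  · exact (encard_le_encard fun x hx => hx.1).trans (not_le.1 fun h => hy (hAT n h)).le

/-- A Borel equivalence relation with finite classes on a standard Borel space admits a
Borel fundamental domain: a Borel set meeting every equivalence class in exactly one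
point. -/
theorem finite_borel_equivalence_relation_has_borel_fundamental_domain
    {X : Type*} [MeasurableSpace X] [StandardBorelSpace X]
    (E : X → X → Prop) (hE : Equivalence E)
    (hgraph : MeasurableSet {p : X × X | E p.1 p.2})
    (hfin : ∀ x, {y | E x y}.Finite) :
    ∃ S : Set X, MeasurableSet S ∧ ∀ x : X, ∃! y, y ∈ S ∧ E x y := by
  obtain ⟨f, hf⟩ := exists_measurableEmbedding_real (α := X)
  set S := {x | ∀ y, E x y → f x ≤ f y}
  have hS : Sᶜ = Prod.fst '' {p : X × X | E p.1 p.2 ∧ f p.2 < f p.1} := by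
    ext x
    simp [S]
  have hSmeas : MeasurableSet S := by
    refine .of_compl (hS ▸ MeasurableSet.image_fst_of_finite ?_ fun x => ?_)
    · exact hgraph.inter (measurableSet_lt (hf.measurable.comp measurable_snd)
        (hf.measurable.comp measurable_fst))
    · exact (hfin x).subset fun y hy => hy.1
  refine ⟨S, hSmeas, fun x => ?_⟩
  obtain ⟨y, hxy, hmin⟩ := exists_min_image _ f (hfin x) ⟨x, hE.refl x⟩
  refine ⟨y, ⟨fun z hyz => hmin z (hE.trans hxy hyz), hxy⟩, fun y' ⟨hy'S, hxy'⟩ => ?_⟩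
  exact hf.injective (le_antisymm (hy'S y (hE.trans (hE.symm hxy') hxy)) (hmin y' hxy'))
end
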